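/- arXiv:2312.11709 — 4 statements merged into one kernel-verified Lean document; each statement's English description precedes it below -/
import Mathlib

section
/- Let a, b, n ∈ ℝ³ and let p : ℝ³ → ℝ³ be the infinitesimal rigid motion p(x) = a + b × x. Let A : ℝ³ → M₃(ℝ) be a differentiable matrix field with tr A(x) = 0 for all x. Then at every point x, curl(y ↦ A(y)ᵀ p(y))(x) · n = p(x) · (curl A)(x) · n − n · A(x) · b; equivalently, since curl p = 2b, p · (curl A) · n = curl(p · A) · n + (1/2) n · A · (curl p). -/
open Matrix MeasureTheory

noncomputable section

abbrev V3 := Fin 3 → ℝ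
abbrev M3 := Matrix (Fin 3) (Fin 3) ℝ

/-- The Levi-Civita symbol in three dimensions. -/
def eps (i j k : Fin 3) : ℝ :=
  (((i : ℕ) : ℝ) - ((j : ℕ) : ℝ)) * (((j : ℕ) : ℝ) - ((k : ℕ) : ℝ)) *
    (((k : ℕ) : ℝ) - ((i : ℕ) : ℝ)) / 2

/-- Partial derivative `∂ₘ f (x)`. -/
def pd (m : Fin 3) (f : V3 → ℝ) (x : V3) : ℝ := fderiv ℝ f x (Pi.single m 1)

/-- Jacobian matrix `(grad u)_{ij} = ∂_j u_i`. -/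
def gradV (u : V3 → V3) (x : V3) : M3 := Matrix.of fun i j => pd j (fun y => u y i) x

/-- Divergence of a vector field. -/
def divV (u : V3 → V3) (x : V3) : ℝ := ∑ i, pd i (fun y => u y i) x

/-- Curl of a vector field: `(curl u)_k = Σ_{m,j} ε_{kmj} ∂_m u_j`. -/
def curlV (u : V3 → V3) (x : V3) : V3 := fun k => ∑ m, ∑ j, eps k m j * pd m (fun y => u y j) x

/-- Row-wise curl of a matrix field: `(curl A)_{ik} = Σ_{m,j} ε_{kmj} ∂_m A_{ij}`. -/
def curlM (A : V3 → M3) (x : V3) : M3 :=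
  Matrix.of fun i k => ∑ m, ∑ j, eps k m j * pd m (fun y => A y i j) x

/-- Row-wise divergence of a matrix field: `(div A)_i = Σ_j ∂_j A_{ij}`. -/
def divM (A : V3 → M3) (x : V3) : V3 := fun i => ∑ j, pd j (fun y => A y i j) x

/-- Symmetric part of a matrix. -/
def symM (M : M3) : M3 := (2⁻¹ : ℝ) • (M + Mᵀ)

/-- Skew-symmetric part of a matrix. -/
def skwM (M : M3) : M3 := (2⁻¹ : ℝ) • (M - Mᵀ)

/-- Linearized deformation `def u = sym grad u`. -/
def defV (u : V3 → V3) (x : V3) : M3 := symM (gradV u x)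

/-- `(mskw v)_{ij} = Σ_k ε_{ikj} v_k`, so that `(mskw v) w = v × w`. -/
def mskw (v : V3) : M3 := Matrix.of fun i j => ∑ k, eps i k j * v k

/-- `vskw = mskw⁻¹ ∘ skw`. -/
def vskw (M : M3) : V3 := fun l => 2⁻¹ * ∑ i, ∑ j, eps i l j * skwM M i j

/-- Frobenius pairing `A : B = Σ_{i,j} A_{ij} B_{ij}`. -/
def frob (A B : M3) : ℝ := ∑ i, ∑ j, A i j * B i j

/-- Outer product `(a ⊗ b)_{ij} = a_i b_j`. -/
def outer (a b : V3) : M3 := Matrix.of fun i j => a i * b j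

/-- Row-wise cross product of a matrix with a vector:
`(M × n)_{ij} = Σ_{k,m} ε_{jkm} M_{ik} n_m`. -/
def mcross (M : M3) (n : V3) : M3 :=
  Matrix.of fun i j => ∑ k, ∑ m, eps j k m * M i k * n m

/-- `𝒮(M) = Mᵀ − tr(M) I`. -/
def Sop (M : M3) : M3 := Mᵀ - Matrix.trace M • (1 : M3)

/-- Incompatibility operator `inc σ = curl ((curl σ)ᵀ)` (row-wise curl). -/
def incM (σ : V3 → M3) (x : V3) : M3 := curlM (fun y => (curlM σ y)ᵀ) x

/-!
By the product rule, `curl (Aᵀ p) = (curl A)ᵀ p + 2 vskw (Aᵀ ∇p)`. For the rigid motion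
`p(x) = a + b × x` the gradient `∇p = mskw b` is constant and skew, and the contraction
`Σ_m ε_{kmj} ε_{ilm} = δ_{ij} δ_{kl} - δ_{jl} δ_{ik}` gives `2 vskw (Aᵀ mskw b) = (tr A) b - A b`,
which is `-A b` for trace-free `A`.
-/

lemma pd_apply_of_hasFDerivAt {u : V3 → V3} {u' : V3 →L[ℝ] V3} {x : V3} (h : HasFDerivAt u u' x)
    (m i : Fin 3) : pd m (fun y => u y i) x = u' (Pi.single m 1) i := by
  rw [pd, (hasFDerivAt_pi'.1 h i).fderiv]
  rfl

lemma pd_dotProduct {u v : V3 → V3} {x : V3} (m : Fin 3)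
    (hu : ∀ i, DifferentiableAt ℝ (fun y => u y i) x)
    (hv : ∀ i, DifferentiableAt ℝ (fun y => v y i) x) :
    pd m (fun y => u y ⬝ᵥ v y) x =
      ∑ i, (pd m (fun y => u y i) x * v x i + u x i * pd m (fun y => v y i) x) := by
  simp only [pd, dotProduct]
  rw [fderiv_fun_sum fun i _ => (hu i).fun_mul (hv i)]
  simp only [FunLike.coe_sum, Finset.sum_apply, fderiv_fun_mul (hu _) (hv _),
    _root_.add_apply, _root_.smul_apply, smul_eq_mul]
  exact Finset.sum_congr rfl fun i _ => by ring

lemma sum_eps_mul_eq_two_mul_vskw (N : M3) (k : Fin 3) :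
    ∑ m, ∑ j, eps k m j * N j m = 2 * vskw N k := by
  fin_cases k <;> simp [vskw, skwM, eps, Fin.sum_univ_three] <;> ring

theorem curlV_transpose_mulVec {A : V3 → M3} {p : V3 → V3} {x : V3}
    (hA : ∀ i j, DifferentiableAt ℝ (fun y => A y i j) x)
    (hp : ∀ i, DifferentiableAt ℝ (fun y => p y i) x) :
    curlV (fun y => (A y)ᵀ *ᵥ p y) x =
      (curlM A x)ᵀ *ᵥ p x + (2 : ℝ) • vskw ((A x)ᵀ * gradV p x) := by
  ext k
  have hcol : ∀ j, (fun y => ((A y)ᵀ *ᵥ p y) j) = fun y => (fun i => A y i j) ⬝ᵥ p y := by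
    intro j; funext y; simp [mulVec, dotProduct]
  simp only [curlV, hcol, pd_dotProduct _ (fun i => hA i _) hp, Pi.add_apply, Pi.smul_apply,
    smul_eq_mul, ← sum_eps_mul_eq_two_mul_vskw]
  simp only [curlM, gradV, mulVec, dotProduct, transpose_apply, of_apply, mul_apply,
    Finset.mul_sum, Finset.sum_mul, Finset.sum_add_distrib, mul_add]
  congr 1
  conv_rhs => rw [Finset.sum_comm]; arg 2; ext m; rw [Finset.sum_comm]
  simp only [mul_assoc]

lemma mskw_mulVec (v w : V3) : mskw v *ᵥ w = v ⨯₃ w := by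
  ext i
  fin_cases i <;> simp [mskw, eps, mulVec, dotProduct, cross_apply, Fin.sum_univ_three] <;> ring

lemma hasFDerivAt_rigidMotion (a b x : V3) :
    HasFDerivAt (fun y => a + b ⨯₃ y) (LinearMap.toContinuousLinearMap (crossProduct b)) x :=
  (LinearMap.toContinuousLinearMap (crossProduct b)).hasFDerivAt.const_add a

lemma gradV_rigidMotion (a b x : V3) : gradV (fun y => a + b ⨯₃ y) x = mskw b := by
  ext i m
  rw [gradV, of_apply, pd_apply_of_hasFDerivAt (hasFDerivAt_rigidMotion a b x),
    LinearMap.coe_toContinuousLinearMap', ← mskw_mulVec, mulVec_single_one, col_apply]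

lemma two_smul_vskw_transpose_mul_mskw (M : M3) (b : V3) :
    (2 : ℝ) • vskw (Mᵀ * mskw b) = trace M • b - M *ᵥ b := by
  ext k
  fin_cases k <;>
    simp [vskw, skwM, mskw, eps, trace, mulVec, dotProduct, mul_apply, Fin.sum_univ_three] <;> ring

/-- Lemma 5.2 (pointwise): for the rigid motion `p(x) = a + b × x` and a differentiable
trace-free matrix field `A`, `curl(Aᵀp) · n = p · (curl A) · n − n · A · b` at every point;
since `curl p = 2b` this is `p·(curl A)·n = curl(p·A)·n + (1/2) n·A·(curl p)`. -/
theorem curl_rigid_motion_pairing (a b n : V3) (p : V3 → V3)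
    (hp : ∀ x, p x = a + crossProduct b x)
    (A : V3 → M3) (hA : ∀ i j, Differentiable ℝ fun y => A y i j)
    (htr : ∀ x, Matrix.trace (A x) = 0) :
    ∀ x, curlV (fun y => (A y)ᵀ *ᵥ p y) x ⬝ᵥ n =
      p x ⬝ᵥ (curlM A x *ᵥ n) - n ⬝ᵥ (A x *ᵥ b) := by
  intro x
  obtain rfl : p = fun y => a + b ⨯₃ y := funext hp
  have hp_diff := differentiableAt_pi.1 (hasFDerivAt_rigidMotion a b x).differentiableAt
  rw [curlV_transpose_mulVec (fun i j => (hA i j).differentiableAt) hp_diff, gradV_rigidMotion,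
    two_smul_vskw_transpose_mul_mskw, htr, zero_smul, zero_sub, add_dotProduct, neg_dotProduct,
    mulVec_transpose, ← dotProduct_mulVec, dotProduct_comm (A x *ᵥ b), sub_eq_add_neg]
end
end

section
/- Let x₀, x₁, x₂, x₃ ∈ ℝ³ be affinely independent points (the vertices of a tetrahedron) and let u : ℝ³ → ℝ³ be an affine map, u(x) = c + L x with c ∈ ℝ³ and L linear. Suppose that for every pair of indices i ≠ j: (1) ∫₀¹ u((1−s)x_i + s x_j) · (x_j − x_i) ds = 0, and (2) (u(x_j) − u(x_i)) · (x_j − x_i) = 0. Then u = 0. -/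
open Matrix MeasureTheory

noncomputable section

/-- The linear functional `w ↦ v ⬝ᵥ w`. -/
def dotL (v : V3) : V3 →ₗ[ℝ] ℝ where
  toFun w := v ⬝ᵥ w
  map_add' a b := by simp [dotProduct_add]
  map_smul' r a := by simp [dotProduct_smul]

/-- Lemma 5.8 (unisolvency): an affine vector field on a tetrahedron whose edge moments
`∫_e u·t_e` and tangential-derivative moments `∫_e ∂_{t_e}(u·t_e)` all vanish is zero. -/
theorem nedelec_second_type_unisolvent (x₀ x₁ x₂ x₃ : V3)
    (hind : AffineIndependent ℝ ![x₀, x₁, x₂, x₃])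
    (c : V3) (L : V3 →ₗ[ℝ] V3) (u : V3 → V3) (hu : ∀ x, u x = c + L x)
    (h1 : ∀ i j : Fin 4, i ≠ j →
      (∫ s in (0:ℝ)..1,
        u ((1 - s) • ![x₀, x₁, x₂, x₃] i + s • ![x₀, x₁, x₂, x₃] j) ⬝ᵥ
          (![x₀, x₁, x₂, x₃] j - ![x₀, x₁, x₂, x₃] i)) = 0)
    (h2 : ∀ i j : Fin 4, i ≠ j →
      (u (![x₀, x₁, x₂, x₃] j) - u (![x₀, x₁, x₂, x₃] i)) ⬝ᵥ
        (![x₀, x₁, x₂, x₃] j - ![x₀, x₁, x₂, x₃] i) = 0) :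
    ∀ x, u x = 0 := by
  set T : Fin 4 → V3 := ![x₀, x₁, x₂, x₃] with hT
  -- spanning property of edge vectors
  have hspan : ∀ i : Fin 4, Submodule.span ℝ (Set.range fun j => T j - T i) = ⊤ := by
    intro i
    have htop : vectorSpan ℝ (Set.range T) = ⊤ :=
      hind.vectorSpan_eq_top_of_card_eq_finrank_add_one (by simp)
    have h := vectorSpan_range_eq_span_range_vsub_right ℝ T i
    rw [htop] at h
    simpa [vsub_eq_sub] using h.symm
  -- condition (2) in terms of L
  have hLtt : ∀ i j : Fin 4, i ≠ j → L (T j - T i) ⬝ᵥ (T j - T i) = 0 := by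
    intro i j hij
    have h := h2 i j hij
    rw [hu, hu] at h
    simpa [map_sub, add_sub_add_left_eq_sub] using h
  -- u vanishes at each vertex: first u(Tᵢ) ⬝ (Tⱼ − Tᵢ) = 0
  have hvert : ∀ i j : Fin 4, i ≠ j → u (T i) ⬝ᵥ (T j - T i) = 0 := by
    intro i j hij
    have hint := h1 i j hij
    have hconst : ∀ s : ℝ, u ((1 - s) • T i + s • T j) ⬝ᵥ (T j - T i)
        = u (T i) ⬝ᵥ (T j - T i) := by
      intro s
      have e1 : (1 - s) • T i + s • T j = T i + s • (T j - T i) := by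
        rw [smul_sub, sub_smul, one_smul]; abel
      rw [e1, hu, hu, map_add, LinearMap.map_smul]
      have e2 : c + (L (T i) + s • L (T j - T i)) = (c + L (T i)) + s • L (T j - T i) := by
        abel
      rw [e2, add_dotProduct, smul_dotProduct, hLtt i j hij]
      simp
    rw [show (∫ s in (0:ℝ)..1,
        u ((1 - s) • T i + s • T j) ⬝ᵥ (T j - T i)) = u (T i) ⬝ᵥ (T j - T i) by
      simp only [hconst]; simp] at hint
    exact hint
  have hu0 : ∀ i : Fin 4, u (T i) = 0 := by
    intro i
    have hφ : dotL (u (T i)) = 0 := by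
      apply LinearMap.ext_on (hspan i)
      rintro w ⟨j, rfl⟩
      by_cases hij : i = j
      · simp [hij, dotL]
      · have h := hvert i j hij; simp only [dotL, LinearMap.coe_mk, AddHom.coe_mk, LinearMap.zero_apply]; exact h
    have := congrFun (congrArg (fun f : V3 →ₗ[ℝ] ℝ => (f : V3 → ℝ)) hφ) (u (T i))
    simp only [dotL, LinearMap.coe_mk, AddHom.coe_mk, LinearMap.zero_apply] at this
    exact dotProduct_self_eq_zero.mp this
  -- L vanishes on a spanning set, hence L = 0
  have hL : L = 0 := by
    apply LinearMap.ext_on (hspan 0)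
    rintro w ⟨j, rfl⟩
    have : L (T j) - L (T 0) = u (T j) - u (T 0) := by rw [hu, hu]; abel
    rw [map_sub, LinearMap.zero_apply, this, hu0 j, hu0 0, sub_zero]
  have hc : c = 0 := by
    have := hu0 0
    rw [hu, hL] at this
    simpa using this
  intro x
  rw [hu, hL, hc]
  simp
end
end

section
/- Let (n, t₁, t₂) be an orthonormal basis of ℝ³ and c ∈ ℝ³. Then mskw(c) × n = −(c · n)(t₁ ⊗ t₁ + t₂ ⊗ t₂) + (c · t₁)(n ⊗ t₁) + (c · t₂)(n ⊗ t₂). -/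
open Matrix MeasureTheory

set_option maxHeartbeats 1000000

noncomputable section

/-- Section 4, item 2: for an orthonormal basis `(n, t₁, t₂)` of `ℝ³`,
`mskw(c) × n = −(c·n)(t₁⊗t₁ + t₂⊗t₂) + (c·t₁)(n⊗t₁) + (c·t₂)(n⊗t₂)`. -/
theorem mskw_cross_orthonormal_decomp (n t₁ t₂ c : V3)
    (hnn : n ⬝ᵥ n = 1) (ht₁ : t₁ ⬝ᵥ t₁ = 1) (ht₂ : t₂ ⬝ᵥ t₂ = 1)
    (hnt₁ : n ⬝ᵥ t₁ = 0) (hnt₂ : n ⬝ᵥ t₂ = 0) (ht₁t₂ : t₁ ⬝ᵥ t₂ = 0) :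
    mcross (mskw c) n =
      -(c ⬝ᵥ n) • (outer t₁ t₁ + outer t₂ t₂) +
        (c ⬝ᵥ t₁) • outer n t₁ + (c ⬝ᵥ t₂) • outer n t₂ := by
  have key : ∀ i j : Fin 3, n i * n j + t₁ i * t₁ j + t₂ i * t₂ j =
      if i = j then (1:ℝ) else 0 := by
    set P : M3 := Matrix.of ![n, t₁, t₂] with hPdef
    have hP : P * Pᵀ = 1 := by
      ext i j
      fin_cases i <;> fin_cases j <;>
        simp only [hPdef, Matrix.mul_apply, Matrix.transpose_apply, Matrix.of_apply,
          Matrix.cons_val_zero, Matrix.cons_val_one, Matrix.head_cons,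
          Matrix.cons_val_two, Matrix.tail_cons, Matrix.one_apply] <;>
        simp only [dotProduct] at hnn ht₁ ht₂ hnt₁ hnt₂ ht₁t₂ <;>
        simp [Fin.sum_univ_three] at hnn ht₁ ht₂ hnt₁ hnt₂ ht₁t₂ ⊢ <;>
        linarith [hnn, ht₁, ht₂, hnt₁, hnt₂, ht₁t₂]
    have hP' : Pᵀ * P = 1 := mul_eq_one_comm.mp hP
    intro i j
    have h := congrFun (congrFun hP' i) j
    simpa [hPdef, Matrix.mul_apply, Matrix.transpose_apply, Matrix.one_apply,
      Fin.sum_univ_three] using h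
  have hc : ∀ j : Fin 3,
      (c ⬝ᵥ n) * n j + (c ⬝ᵥ t₁) * t₁ j + (c ⬝ᵥ t₂) * t₂ j = c j := by
    intro j
    have k0 := key 0 j
    have k1 := key 1 j
    have k2 := key 2 j
    simp only [dotProduct, Fin.sum_univ_three]
    fin_cases j <;> simp at k0 k1 k2 ⊢ <;>
      linear_combination c 0 * k0 + c 1 * k1 + c 2 * k2
  have L : ∀ i j : Fin 3, mcross (mskw c) n i j =
      n i * c j - (if i = j then (c ⬝ᵥ n) else 0) := by
    intro i j
    fin_cases i <;> fin_cases j <;>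
      simp [mcross, mskw, eps, Fin.sum_univ_three, dotProduct] <;> ring
  ext i j
  have hk := key i j
  have h := hc j
  simp only [Matrix.add_apply, Matrix.smul_apply, Matrix.neg_apply, outer,
    Matrix.of_apply, smul_eq_mul, L i j]
  by_cases hij : i = j
  · subst hij
    simp only [if_pos rfl, eq_self_iff_true, if_true] at hk ⊢
    linear_combination (c ⬝ᵥ n) * hk - (n i) * h
  · simp only [if_neg hij] at hk ⊢
    linear_combination (c ⬝ᵥ n) * hk - (n i) * h
end
end

section
/- Let M : ℝ³ → M₃(ℝ) be a continuously differentiable matrix field. Then the row-wise divergence of 𝒮(M) satisfies div(𝒮 M) = 2 vskw(curl M); in components, Σ_j ∂_j (M_{ji} − (tr M) δ_{ij}) = 2 (vskw(curl M))_i for each i, where curl is the row-wise curl. -/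
open Matrix MeasureTheory

noncomputable section

/-!
Both sides reduce to `div Mᵀ − ∇ tr M`. For the divergence this is the definition of `𝒮`, since
`div (f I) = ∇ f`. For the curl, `2 vskw(C)_l = Σ ε_{ilj} C_{ij}` because `ε` is antisymmetric in
`i, j`, and the contraction `Σ_j ε_{ilj} ε_{jmk} = δ_{im} δ_{lk} − δ_{ik} δ_{lm}` turns
`Σ ε_{ilj} ε_{jmk} ∂_m M_{ik}` into `Σ_i ∂_i M_{il} − Σ_i ∂_l M_{ii}`.
-/

lemma eps_swap (i j k : Fin 3) : eps i j k = -eps k j i := by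
  unfold eps; ring

lemma sum_eps_mul_eps (i l m k : Fin 3) :
    ∑ j, eps i l j * eps j m k =
      (if i = m then 1 else 0) * (if l = k then 1 else 0)
        - (if i = k then 1 else 0) * (if l = m then 1 else 0) := by
  fin_cases i <;> fin_cases l <;> fin_cases m <;> fin_cases k <;>
    norm_num [eps, Fin.sum_univ_three]

lemma sum_eps_mul_skwM (A : M3) (l : Fin 3) :
    ∑ i, ∑ j, eps i l j * skwM A i j = ∑ i, ∑ j, eps i l j * A i j := by
  have hswap : ∑ i, ∑ j, eps i l j * A j i = -∑ i, ∑ j, eps i l j * A i j := by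
    rw [Finset.sum_comm, ← Finset.sum_neg_distrib]
    refine Finset.sum_congr rfl fun i _ => ?_
    rw [← Finset.sum_neg_distrib]
    refine Finset.sum_congr rfl fun j _ => ?_
    rw [eps_swap, neg_mul]
  calc ∑ i, ∑ j, eps i l j * skwM A i j
      = 2⁻¹ * (∑ i, ∑ j, eps i l j * A i j - ∑ i, ∑ j, eps i l j * A j i) := by
        simp only [skwM, Matrix.smul_apply, Matrix.sub_apply, Matrix.transpose_apply,
          smul_eq_mul, Finset.mul_sum, ← Finset.sum_sub_distrib]
        ring_nf
    _ = ∑ i, ∑ j, eps i l j * A i j := by rw [hswap]; ring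

lemma two_smul_vskw_curlM (M : V3 → M3) (x : V3) (l : Fin 3) :
    ((2 : ℝ) • vskw (curlM M x)) l =
      ∑ i, pd i (fun y => M y i l) x - ∑ i, pd l (fun y => M y i i) x := by
  have hcontract : ∑ i, ∑ j, eps i l j * curlM M x i j =
      ∑ i, ∑ m, ∑ k, (∑ j, eps i l j * eps j m k) * pd m (fun y => M y i k) x := by
    simp only [curlM, Matrix.of_apply, Finset.mul_sum, Finset.sum_mul, mul_assoc]
    refine Finset.sum_congr rfl fun i _ => ?_
    rw [Finset.sum_comm]
    exact Finset.sum_congr rfl fun m _ => Finset.sum_comm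
  have hvskw : ((2 : ℝ) • vskw (curlM M x)) l = ∑ i, ∑ j, eps i l j * curlM M x i j := by
    simp only [Pi.smul_apply, vskw, sum_eps_mul_skwM, smul_eq_mul]
    ring
  rw [hvskw, hcontract]
  simp [sum_eps_mul_eps, sub_mul, Finset.sum_sub_distrib, ite_mul]

lemma pd_sub {f g : V3 → ℝ} {x : V3} (m : Fin 3)
    (hf : DifferentiableAt ℝ f x) (hg : DifferentiableAt ℝ g x) :
    pd m (fun y => f y - g y) x = pd m f x - pd m g x := by
  simp [pd, fderiv_fun_sub hf hg]

lemma pd_sum {ι : Type*} (s : Finset ι) {f : ι → V3 → ℝ} {x : V3} (m : Fin 3)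
    (hf : ∀ i ∈ s, DifferentiableAt ℝ (f i) x) :
    pd m (fun y => ∑ i ∈ s, f i y) x = ∑ i ∈ s, pd m (f i) x := by
  simp [pd, fderiv_fun_sum hf]

lemma divM_sub {A B : V3 → M3} {x : V3}
    (hA : ∀ i j, DifferentiableAt ℝ (fun y => A y i j) x)
    (hB : ∀ i j, DifferentiableAt ℝ (fun y => B y i j) x) :
    divM (fun y => A y - B y) x = divM A x - divM B x := by
  funext i
  simp only [divM, Matrix.sub_apply, pd_sub _ (hA _ _) (hB _ _), Finset.sum_sub_distrib,
    Pi.sub_apply]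

lemma divM_transpose_apply (A : V3 → M3) (x : V3) (i : Fin 3) :
    divM (fun y => (A y)ᵀ) x i = ∑ j, pd j (fun y => A y j i) x :=
  rfl

lemma divM_smul_one (f : V3 → ℝ) (x : V3) :
    divM (fun y => f y • (1 : M3)) x = fun i => pd i f x := by
  funext i
  rw [divM, Finset.sum_eq_single i]
  · simp
  · intro j _ hji
    simp [Matrix.one_apply_ne' hji, pd]
  · simp

lemma pd_trace {A : V3 → M3} {x : V3} (m : Fin 3)
    (hA : ∀ i, DifferentiableAt ℝ (fun y => A y i i) x) :
    pd m (fun y => trace (A y)) x = ∑ i, pd m (fun y => A y i i) x :=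
  pd_sum _ m fun i _ => hA i

lemma divM_Sop_apply {A : V3 → M3} {x : V3}
    (hA : ∀ i j, DifferentiableAt ℝ (fun y => A y i j) x) (l : Fin 3) :
    divM (fun y => Sop (A y)) x l =
      ∑ j, pd j (fun y => A y j l) x - ∑ i, pd l (fun y => A y i i) x := by
  have htrace : DifferentiableAt ℝ (fun y => trace (A y)) x := by
    simpa [Matrix.trace] using DifferentiableAt.fun_sum fun i _ => hA i i
  have htraceI : ∀ i j, DifferentiableAt ℝ (fun y => (trace (A y) • (1 : M3)) i j) x :=
    fun i j => by simpa using htrace.mul_const ((1 : M3) i j)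
  unfold Sop
  rw [divM_sub (A := fun y => (A y)ᵀ) (fun i j => hA j i) htraceI, divM_smul_one,
    Pi.sub_apply, divM_transpose_apply, pd_trace l fun i => hA i i]

/-- The anticommutativity identity `dS = −Sd` at index 2:
`div(𝒮 M) = 2 vskw(curl M)` for a `C¹` matrix field `M` (row-wise div and curl). -/
theorem div_Sop (M : V3 → M3) (hM : ∀ i j, ContDiff ℝ 1 fun y => M y i j) :
    ∀ x, divM (fun y => Sop (M y)) x = (2 : ℝ) • vskw (curlM M x) := by
  intro x
  have hM' : ∀ i j, DifferentiableAt ℝ (fun y => M y i j) x :=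
    fun i j => ((hM i j).differentiable one_ne_zero).differentiableAt
  funext l
  rw [divM_Sop_apply hM', two_smul_vskw_curlM]
end
end
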